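/- If L is a subdirectly irreducible pm-algebra, then either Body(L) has fewer than two elements, or Body(L) = {P, φ(P)} for some prime filter P with φ(P) ≠ P. -/

import Mathlib

/-- A pseudocomplemented De Morgan algebra (pm-algebra): a bounded distributive
lattice with a De Morgan involution `dm` and a pseudocomplement `pc`. -/
class PMAlgebra (L : Type*) extends DistribLattice L, BoundedOrder L where
  dm : L → L
  pc : L → L
  dm_dm : ∀ a : L, dm (dm a) = a
  dm_inf : ∀ a b : L, dm (a ⊓ b) = dm a ⊔ dm b
  pc_iff : ∀ a b : L, a ⊓ b = ⊥ ↔ b ≤ pc a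

namespace PMAlgebra

variable {L : Type*} [PMAlgebra L]

/-- A congruence of a pm-algebra. -/
def IsCongruence (θ : L → L → Prop) : Prop :=
  Equivalence θ ∧
  (∀ a b c d : L, θ a b → θ c d → θ (a ⊓ c) (b ⊓ d)) ∧
  (∀ a b c d : L, θ a b → θ c d → θ (a ⊔ c) (b ⊔ d)) ∧
  (∀ a b : L, θ a b → θ (dm a) (dm b)) ∧
  (∀ a b : L, θ a b → θ (pc a) (pc b))

/-- `L` is simple: it has more than one element and its only congruences are
equality and the total relation. -/
def Simple (L : Type*) [PMAlgebra L] : Prop :=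
  Nontrivial L ∧ ∀ θ : L → L → Prop, IsCongruence θ →
    θ = (fun a b => a = b) ∨ θ = (fun _ _ => True)

/-- `L` is subdirectly irreducible: there is a congruence `μ ≠ Eq` contained in
every congruence different from equality. -/
def SubdirectlyIrreducible (L : Type*) [PMAlgebra L] : Prop :=
  ∃ μ : L → L → Prop, IsCongruence μ ∧ μ ≠ (fun a b => a = b) ∧
    ∀ θ : L → L → Prop, IsCongruence θ → θ ≠ (fun a b => a = b) →
      ∀ a b : L, μ a b → θ a b

/-- A prime filter of the underlying lattice of `L`. -/
def IsPrimeFilter (P : Set L) : Prop :=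
  P.Nonempty ∧ P ≠ Set.univ ∧
  (∀ a b : L, a ∈ P → a ≤ b → b ∈ P) ∧
  (∀ a b : L, a ∈ P → b ∈ P → a ⊓ b ∈ P) ∧
  (∀ a b : L, a ⊔ b ∈ P → a ∈ P ∨ b ∈ P)

/-- The Birula–Rasiowa transformation. -/
def phi (P : Set L) : Set L := {a : L | dm a ∉ P}

/-- `P` is a maximal prime filter. -/
def IsMaximalPF (P : Set L) : Prop :=
  IsPrimeFilter P ∧ ∀ Q : Set L, IsPrimeFilter Q → P ⊆ Q → Q = P

/-- `P` is a minimal prime filter. -/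
def IsMinimalPF (P : Set L) : Prop :=
  IsPrimeFilter P ∧ ∀ Q : Set L, IsPrimeFilter Q → Q ⊆ P → Q = P

/-- The body of `L`: prime filters that are neither maximal nor minimal. -/
def body (L : Type*) [PMAlgebra L] : Set (Set L) :=
  {P : Set L | IsPrimeFilter P ∧ ¬ IsMaximalPF P ∧ ¬ IsMinimalPF P}

/-- The prime filter space of `L` is φ-connected. -/
def PhiConnected (L : Type*) [PMAlgebra L] : Prop :=
  ∀ S : Set (Set L), S ⊆ {P : Set L | IsPrimeFilter P} → S.Nonempty →
    (∀ P Q : Set L, P ∈ S → IsPrimeFilter Q → P ⊆ Q → Q ∈ S) →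
    (∀ P Q : Set L, P ∈ S → IsPrimeFilter Q → Q ⊆ P → Q ∈ S) →
    (∀ P : Set L, P ∈ S → phi P ∈ S) →
    S = {P : Set L | IsPrimeFilter P}

/-- The Kleene identity. -/
def Kleene (L : Type*) [PMAlgebra L] : Prop :=
  ∀ a b : L, a ⊓ dm a ≤ b ⊔ dm b

/-- The term `C(x) = (x ∧ x') ∨ (x ∧ x')*`. -/
def C (x : L) : L := (x ⊓ dm x) ⊔ pc (x ⊓ dm x)

/-- The term `T(x) = C(x) ∧ C(x)'`. -/
def T (x : L) : L := C x ⊓ dm (C x)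

end PMAlgebra

open PMAlgebra

/-! Let `μ` be the monolith, `μ a b` with `a ≠ b`, and `R` a prime filter containing exactly one
of `a`, `b`. If a set `C` of prime filters is `φ`-closed and contains no maximal one, agreement on
all prime filters outside `C` is a congruence: for `*`, a prime filter with `u* ∈ R`, `v* ∉ R`
extends to a maximal one containing `v` and hence `u`, contradicting `u ⊓ u* = ⊥`.

If some `W` in the body differs from `R` and `φ R`, pick `x ∈ W`, `y ∉ W` such that none of `R`,
`φ R`, `M`, `φ M` (`M` maximal) contains `x` but not `y`; this is possible because `c ⊔ c*` lies in
every maximal prime filter, and `W`, being neither maximal nor minimal, misses some `c ⊔ c*` and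
contains some `(c ⊔ c*)'`. Let `C` consist of the `S` such that `S` or `φ S` contains `x` but not
`y`. The congruence of `C` relates `x ⊓ y` to `x`, which `W` tells apart, so it contains `μ`; yet
`R ∉ C` tells `a` from `b`. Hence the body lies in `{R, φ R}`. -/

open Order

theorem Set.encard_lt_two_or_eq_pair_of_subset {α : Type*} {s : Set α} {a b : α}
    (h : s ⊆ {a, b}) : s.encard < 2 ∨ (s = {a, b} ∧ a ≠ b) := by
  obtain rfl | hab := eq_or_ne a b
  · left
    calc s.encard ≤ ({a} : Set α).encard := Set.encard_le_encard (by simpa using h)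
      _ < 2 := by rw [Set.encard_singleton]; norm_num
  · rcases lt_or_ge s.encard 2 with hs | hs
    · exact Or.inl hs
    · exact Or.inr ⟨(Set.toFinite _).eq_of_subset_of_encard_le' h
        (by rwa [Set.encard_pair hab]), hab⟩

namespace PMAlgebra

variable {L : Type*} [PMAlgebra L] {P Q R W : Set L} {a b c x y : L}

theorem dm_le_dm (h : a ≤ b) : dm b ≤ dm a :=
  calc dm b ≤ dm a ⊔ dm b := le_sup_right
    _ = dm a := by rw [← dm_inf, inf_eq_left.2 h]

theorem dm_sup (a b : L) : dm (a ⊔ b) = dm a ⊓ dm b := by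
  rw [← dm_dm (dm a ⊓ dm b), dm_inf, dm_dm, dm_dm]

theorem inf_pc_self (a : L) : a ⊓ pc a = ⊥ := (pc_iff a (pc a)).2 le_rfl

namespace IsPrimeFilter

theorem mem_of_le (hP : IsPrimeFilter P) (ha : a ∈ P) (hab : a ≤ b) : b ∈ P :=
  hP.2.2.1 a b ha hab

theorem top_mem (hP : IsPrimeFilter P) : ⊤ ∈ P :=
  let ⟨_, ha⟩ := hP.1
  hP.mem_of_le ha le_top

theorem bot_notMem (hP : IsPrimeFilter P) : ⊥ ∉ P := fun h =>
  hP.2.1 (Set.eq_univ_of_forall fun _ => hP.mem_of_le h bot_le)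

theorem inf_mem_iff (hP : IsPrimeFilter P) : a ⊓ b ∈ P ↔ a ∈ P ∧ b ∈ P :=
  ⟨fun h => ⟨hP.mem_of_le h inf_le_left, hP.mem_of_le h inf_le_right⟩,
    fun h => hP.2.2.2.1 a b h.1 h.2⟩

theorem sup_mem_iff (hP : IsPrimeFilter P) : a ⊔ b ∈ P ↔ a ∈ P ∨ b ∈ P :=
  ⟨hP.2.2.2.2 a b, fun h => h.elim (hP.mem_of_le · le_sup_left) (hP.mem_of_le · le_sup_right)⟩

theorem pc_notMem (hP : IsPrimeFilter P) (ha : a ∈ P) : pc a ∉ P := fun h =>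
  hP.bot_notMem (inf_pc_self a ▸ hP.2.2.2.1 _ _ ha h)

theorem sup_pc_notMem_of_subset (hP : IsPrimeFilter P) (hQ : IsPrimeFilter Q) (hPQ : P ⊆ Q)
    (hcQ : c ∈ Q) (hcP : c ∉ P) : c ⊔ pc c ∉ P := by
  rw [hP.sup_mem_iff, not_or]
  exact ⟨hcP, fun h => hQ.pc_notMem hcQ (hPQ h)⟩

end IsPrimeFilter

theorem isPrimeFilter_compl_of_isPrime {J : Ideal L} (hJ : J.IsPrime) :
    IsPrimeFilter (J : Set L)ᶜ := by
  refine ⟨⟨⊤, hJ.top_notMem⟩, ?_, fun a b ha hab => Ideal.mem_compl_of_ge hab ha, ?_, ?_⟩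
  · exact fun h => (h ▸ Set.mem_univ ⊥ : ⊥ ∈ (J : Set L)ᶜ) J.bot_mem
  · intro a b ha hb hab
    exact (hJ.mem_or_mem hab).elim ha hb
  · intro a b hab
    by_contra! h
    exact hab (Ideal.sup_mem (not_not.1 h.1) (not_not.1 h.2))

theorem exists_isPrimeFilter_of_notMem (F : PFilter L) (hb : b ∉ F) :
    ∃ P, IsPrimeFilter P ∧ (F : Set L) ⊆ P ∧ b ∉ P := by
  have hdisj : Disjoint (F : Set L) (Ideal.principal b) :=
    Set.disjoint_left.2 fun a ha hab => hb (F.mem_of_le (Ideal.mem_principal.1 hab) ha)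
  obtain ⟨J, hJ, hbJ, hFJ⟩ := DistribLattice.prime_ideal_of_disjoint_filter_ideal hdisj
  exact ⟨(J : Set L)ᶜ, isPrimeFilter_compl_of_isPrime hJ,
    Set.subset_compl_iff_disjoint_right.2 hFJ, not_not.2 (hbJ Ideal.mem_principal_self)⟩

theorem exists_isPrimeFilter_mem_notMem (h : ¬ a ≤ b) :
    ∃ P, IsPrimeFilter P ∧ a ∈ P ∧ b ∉ P := by
  obtain ⟨P, hP, hFP, hbP⟩ :=
    exists_isPrimeFilter_of_notMem (PFilter.principal a) (PFilter.mem_principal.not.2 h)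
  exact ⟨P, hP, hFP (PFilter.mem_principal.2 le_rfl), hbP⟩

theorem exists_isPrimeFilter_not_mem_iff_mem_of_ne (h : a ≠ b) :
    ∃ P, IsPrimeFilter P ∧ ¬ (a ∈ P ↔ b ∈ P) := by
  rcases not_and_or.1 (mt (fun h => le_antisymm h.1 h.2) h) with hab | hba
  · obtain ⟨P, hP, ha, hb⟩ := exists_isPrimeFilter_mem_notMem hab
    exact ⟨P, hP, fun h => hb (h.1 ha)⟩
  · obtain ⟨P, hP, hb, ha⟩ := exists_isPrimeFilter_mem_notMem hba
    exact ⟨P, hP, fun h => ha (h.2 hb)⟩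

theorem isPrimeFilter_sUnion {S : Set (Set L)} (hS : ∀ P ∈ S, IsPrimeFilter P)
    (hchain : IsChain (· ⊆ ·) S) (hne : S.Nonempty) : IsPrimeFilter (⋃₀ S) := by
  obtain ⟨P₀, hP₀⟩ := hne
  refine ⟨⟨⊤, P₀, hP₀, (hS P₀ hP₀).top_mem⟩, ?_, ?_, ?_, ?_⟩
  · intro h
    obtain ⟨P, hP, hbot⟩ := (h ▸ Set.mem_univ ⊥ : ⊥ ∈ ⋃₀ S)
    exact (hS P hP).bot_notMem hbot
  · rintro a b ⟨P, hP, ha⟩ hab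
    exact ⟨P, hP, (hS P hP).mem_of_le ha hab⟩
  · rintro a b ⟨P, hP, ha⟩ ⟨Q, hQ, hb⟩
    rcases hchain.total hP hQ with hPQ | hQP
    · exact ⟨Q, hQ, (hS Q hQ).inf_mem_iff.2 ⟨hPQ ha, hb⟩⟩
    · exact ⟨P, hP, (hS P hP).inf_mem_iff.2 ⟨ha, hQP hb⟩⟩
  · rintro a b ⟨P, hP, hab⟩
    exact ((hS P hP).sup_mem_iff.1 hab).imp (⟨P, hP, ·⟩) (⟨P, hP, ·⟩)

theorem IsPrimeFilter.exists_isMaximalPF_superset (hP : IsPrimeFilter P) :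
    ∃ M, IsMaximalPF M ∧ P ⊆ M := by
  obtain ⟨M, hPM, hM⟩ := zorn_subset_nonempty {Q | IsPrimeFilter Q}
    (fun S hS hchain hne => ⟨_, isPrimeFilter_sUnion hS hchain hne,
      fun _ => Set.subset_sUnion_of_mem⟩) P hP
  exact ⟨M, ⟨hM.prop, fun Q hQ hMQ => (hM.eq_of_subset hQ hMQ).symm⟩, hPM⟩

theorem IsPrimeFilter.exists_isMaximalPF_of_pc_notMem (hR : IsPrimeFilter R) (hc : pc c ∉ R) :
    ∃ M, IsMaximalPF M ∧ R ⊆ M ∧ c ∈ M := by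
  have hF : IsPFilter {t | ∃ r ∈ R, r ⊓ c ≤ t} := by
    refine IsPFilter.of_def ⟨c, ⊤, hR.top_mem, inf_le_right⟩ ?_
      fun hst ⟨r, hr, hle⟩ => ⟨r, hr, hle.trans hst⟩
    rintro s ⟨r, hr, hs⟩ t ⟨r', hr', ht⟩
    refine ⟨s ⊓ t, ⟨r ⊓ r', hR.inf_mem_iff.2 ⟨hr, hr'⟩, le_inf ?_ ?_⟩,
      inf_le_left, inf_le_right⟩
    · exact le_trans (inf_le_inf_right c inf_le_left) hs
    · exact le_trans (inf_le_inf_right c inf_le_right) ht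
  have hbot : ⊥ ∉ hF.toPFilter := fun ⟨r, hr, hle⟩ =>
    hc (hR.mem_of_le hr ((pc_iff c r).1 (inf_comm r c ▸ le_bot_iff.1 hle)))
  obtain ⟨Q, hQ, hFQ, -⟩ := exists_isPrimeFilter_of_notMem hF.toPFilter hbot
  obtain ⟨M, hM, hQM⟩ := hQ.exists_isMaximalPF_superset
  exact ⟨M, hM, fun r hr => hQM (hFQ ⟨r, hr, inf_le_left⟩),
    hQM (hFQ ⟨⊤, hR.top_mem, inf_le_right⟩)⟩

theorem IsMaximalPF.pc_mem_of_notMem (hM : IsMaximalPF P) (hc : c ∉ P) : pc c ∈ P := by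
  by_contra hpc
  obtain ⟨Q, hQ, hPQ, hcQ⟩ := hM.1.exists_isMaximalPF_of_pc_notMem hpc
  exact hc (hM.2 Q hQ.1 hPQ ▸ hcQ)

theorem IsMaximalPF.sup_pc_mem (hM : IsMaximalPF P) (c : L) : c ⊔ pc c ∈ P := by
  by_cases hc : c ∈ P
  · exact hM.1.mem_of_le hc le_sup_left
  · exact hM.1.mem_of_le (hM.pc_mem_of_notMem hc) le_sup_right

theorem dm_mem_phi : dm a ∈ phi P ↔ a ∉ P := by
  rw [phi, Set.mem_ofPred_eq, dm_dm]

theorem phi_phi (P : Set L) : phi (phi P) = P := by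
  ext a
  simp only [phi, Set.mem_ofPred_eq, dm_dm, not_not]

theorem phi_subset_phi (h : P ⊆ Q) : phi Q ⊆ phi P := fun _ ha hP => ha (h hP)

theorem IsPrimeFilter.phi (hP : IsPrimeFilter P) : IsPrimeFilter (phi P) := by
  obtain ⟨a, ha⟩ := hP.1
  obtain ⟨b, hb⟩ := (Set.ne_univ_iff_exists_notMem P).1 hP.2.1
  refine ⟨⟨dm b, dm_mem_phi.2 hb⟩, fun h => dm_mem_phi.1 (h ▸ Set.mem_univ (dm a)) ha,
    fun a b ha hab hb => ha (hP.mem_of_le hb (dm_le_dm hab)), fun a b ha hb => ?_,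
    fun a b hab => ?_⟩
  · change dm (a ⊓ b) ∉ P
    rw [dm_inf, hP.sup_mem_iff]
    exact not_or.2 ⟨ha, hb⟩
  · change dm (a ⊔ b) ∉ P at hab
    rw [dm_sup, hP.inf_mem_iff] at hab
    exact not_and_or.1 hab

theorem IsMaximalPF.isMinimalPF_phi (hP : IsMaximalPF P) : IsMinimalPF (phi P) := by
  refine ⟨hP.1.phi, fun Q hQ hQP => ?_⟩
  have hPQ : P ⊆ phi Q := phi_phi P ▸ phi_subset_phi hQP
  rw [← hP.2 _ hQ.phi hPQ, phi_phi]

theorem exists_notMem_forall_isMaximalPF_mem (hP : IsPrimeFilter P) (hmax : ¬ IsMaximalPF P) :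
    ∃ e ∉ P, ∀ M, IsMaximalPF M → e ∈ M := by
  obtain ⟨Q, hQ, hPQ, hQP⟩ : ∃ Q, IsPrimeFilter Q ∧ P ⊆ Q ∧ Q ≠ P := by
    simpa [IsMaximalPF, hP] using hmax
  obtain ⟨c, hcQ, hcP⟩ := Set.exists_of_ssubset (hPQ.ssubset_of_ne hQP.symm)
  exact ⟨c ⊔ pc c, hP.sup_pc_notMem_of_subset hQ hPQ hcQ hcP, fun M hM => hM.sup_pc_mem c⟩

theorem exists_mem_forall_isMaximalPF_notMem_phi (hP : IsPrimeFilter P)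
    (hmin : ¬ IsMinimalPF P) : ∃ x ∈ P, ∀ M, IsMaximalPF M → x ∉ phi M := by
  have hmax : ¬ IsMaximalPF (phi P) := fun h => hmin (phi_phi P ▸ h.isMinimalPF_phi)
  obtain ⟨e, he, hmax⟩ := exists_notMem_forall_isMaximalPF_mem hP.phi hmax
  exact ⟨dm e, by simpa [phi] using he, fun M hM => by simpa [phi, dm_dm] using hmax M hM⟩

def Separates (x y : L) (R : Set L) : Prop := x ∈ R ∧ y ∉ R

theorem Separates.mono {x' y' : L} (hR : IsPrimeFilter R) (h : Separates x y R) (hx : x ≤ x')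
    (hy : y' ≤ y) : Separates x' y' R :=
  ⟨hR.mem_of_le h.1 hx, fun h' => h.2 (hR.mem_of_le h' hy)⟩

theorem IsPrimeFilter.exists_not_separates_of_ne (hW : IsPrimeFilter W) (h : R ≠ W) :
    ∃ x ∈ W, ∃ y ∉ W, ¬ Separates x y R := by
  by_cases hWR : W ⊆ R
  · obtain ⟨y, hyR, hyW⟩ := Set.exists_of_ssubset (hWR.ssubset_of_ne h.symm)
    exact ⟨⊤, hW.top_mem, y, hyW, fun h => h.2 hyR⟩
  · obtain ⟨x, hxW, hxR⟩ := Set.not_subset.1 hWR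
    exact ⟨x, hxW, ⊥, hW.bot_notMem, fun h => hxR h.1⟩

theorem exists_separating_pair (hW : W ∈ body L) (hR : IsPrimeFilter R) (h₁ : R ≠ W)
    (h₂ : phi R ≠ W) :
    ∃ x y : L, Separates x y W ∧ ¬ Separates x y R ∧ ¬ Separates x y (phi R) ∧
      ∀ M, IsMaximalPF M → ¬ Separates x y M ∧ ¬ Separates x y (phi M) := by
  obtain ⟨hWp, hWmax, hWmin⟩ := hW
  obtain ⟨e, heW, he⟩ := exists_notMem_forall_isMaximalPF_mem hWp hWmax
  obtain ⟨d, hdW, hd⟩ := exists_mem_forall_isMaximalPF_notMem_phi hWp hWmin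
  obtain ⟨x₁, hx₁, y₁, hy₁, hR₁⟩ := hWp.exists_not_separates_of_ne h₁
  obtain ⟨x₂, hx₂, y₂, hy₂, hR₂⟩ := hWp.exists_not_separates_of_ne h₂
  refine ⟨d ⊓ x₁ ⊓ x₂, e ⊔ y₁ ⊔ y₂, ⟨?_, ?_⟩, fun h => hR₁ ?_, fun h => hR₂ ?_,
    fun M hM => ⟨fun h => h.2 ?_, fun h => hd M hM ?_⟩⟩
  · rw [hWp.inf_mem_iff, hWp.inf_mem_iff]
    exact ⟨⟨hdW, hx₁⟩, hx₂⟩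
  · rw [hWp.sup_mem_iff, hWp.sup_mem_iff, not_or, not_or]
    exact ⟨⟨heW, hy₁⟩, hy₂⟩
  · exact h.mono hR (inf_le_left.trans inf_le_right) (le_sup_right.trans le_sup_left)
  · exact h.mono hR.phi inf_le_right le_sup_right
  · exact hM.1.mem_of_le (he M hM) (le_sup_left.trans le_sup_left)
  · exact hM.1.phi.mem_of_le h.1 (inf_le_left.trans inf_le_left)

def AgreeOff (C : Set (Set L)) (u v : L) : Prop :=
  ∀ R, IsPrimeFilter R → R ∉ C → (u ∈ R ↔ v ∈ R)

section AgreeOff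

variable {C : Set (Set L)} {u v : L}

theorem AgreeOff.pc_mem (hC : ∀ M, IsMaximalPF M → M ∉ C) (huv : AgreeOff C u v)
    (hR : IsPrimeFilter R) (hu : pc u ∈ R) : pc v ∈ R := by
  by_contra hv
  obtain ⟨M, hM, hRM, hvM⟩ := hR.exists_isMaximalPF_of_pc_notMem hv
  exact hM.1.pc_notMem ((huv M hM.1 (hC M hM)).2 hvM) (hRM hu)

theorem isCongruence_agreeOff (hmax : ∀ M, IsMaximalPF M → M ∉ C)
    (hphi : ∀ R, R ∉ C → phi R ∉ C) : IsCongruence (AgreeOff C) := by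
  have hequiv : Equivalence (AgreeOff C) :=
    ⟨fun _ _ _ _ => Iff.rfl, fun h R hR hRC => (h R hR hRC).symm,
      fun h h' R hR hRC => (h R hR hRC).trans (h' R hR hRC)⟩
  refine ⟨hequiv, ?_, ?_, ?_, ?_⟩
  · intro a b c d hab hcd R hR hRC
    rw [hR.inf_mem_iff, hR.inf_mem_iff, hab R hR hRC, hcd R hR hRC]
  · intro a b c d hab hcd R hR hRC
    rw [hR.sup_mem_iff, hR.sup_mem_iff, hab R hR hRC, hcd R hR hRC]
  · exact fun a b hab R hR hRC => not_iff_not.1 (hab (phi R) hR.phi (hphi R hRC))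
  · exact fun a b hab R hR _ => ⟨hab.pc_mem hmax hR, (hequiv.symm hab).pc_mem hmax hR⟩

end AgreeOff

theorem exists_congruence_of_mem_body (hW : W ∈ body L) (hR : IsPrimeFilter R) (h₁ : R ≠ W)
    (h₂ : phi R ≠ W) :
    ∃ θ : L → L → Prop, IsCongruence θ ∧ θ ≠ (fun a b => a = b) ∧
      ∀ a b, θ a b → (a ∈ R ↔ b ∈ R) := by
  obtain ⟨x, y, hxyW, hxyR, hxyR', hxyM⟩ := exists_separating_pair hW hR h₁ h₂
  set C : Set (Set L) := {S | Separates x y S ∨ Separates x y (phi S)}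
  have hRC : R ∉ C := fun h => h.elim hxyR hxyR'
  have hθ : IsCongruence (AgreeOff C) := by
    refine isCongruence_agreeOff (fun M hM h => h.elim (hxyM M hM).1 (hxyM M hM).2)
      fun S hS => ?_
    simpa [C, phi_phi, or_comm] using hS
  have hinf : AgreeOff C (x ⊓ y) x := fun S hS hSC =>
    ⟨fun h => hS.mem_of_le h inf_le_left,
      fun hx => hS.inf_mem_iff.2 ⟨hx, by_contra fun hy => hSC (Or.inl ⟨hx, hy⟩)⟩⟩
  refine ⟨AgreeOff C, hθ, fun h => ?_, fun a b h => h R hR hRC⟩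
  rw [h] at hinf
  exact hxyW.2 (hW.1.inf_mem_iff.1 (hinf ▸ hxyW.1)).2

theorem SubdirectlyIrreducible.exists_body_subset_pair (hsi : SubdirectlyIrreducible L) :
    ∃ R, IsPrimeFilter R ∧ body L ⊆ {R, phi R} := by
  obtain ⟨μ, hμ, hμne, hμmin⟩ := hsi
  obtain ⟨a, b, hab, hne⟩ : ∃ a b, μ a b ∧ a ≠ b := by
    by_contra! h
    exact hμne (funext₂ fun a b => propext ⟨h a b, fun hab => hab ▸ hμ.1.refl a⟩)
  obtain ⟨R, hR, hRab⟩ := exists_isPrimeFilter_not_mem_iff_mem_of_ne hne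
  refine ⟨R, hR, fun W hW => ?_⟩
  by_contra hWR
  simp only [Set.mem_insert_iff, Set.mem_singleton_iff, not_or] at hWR
  obtain ⟨θ, hθ, hθne, hθR⟩ :=
    exists_congruence_of_mem_body hW hR (Ne.symm hWR.1) (Ne.symm hWR.2)
  exact hRab (hθR a b (hμmin θ hθ hθne a b hab))

end PMAlgebra

/-- In a subdirectly irreducible pm-algebra either the body has fewer than two
elements or it is of the form `{P, φ(P)}` with `φ(P) ≠ P`. -/
theorem body_of_subdirectlyIrreducible {L : Type*} [PMAlgebra L]
    (hsi : SubdirectlyIrreducible L) :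
    (body L).encard < 2 ∨
      ∃ P : Set L, IsPrimeFilter P ∧ phi P ≠ P ∧ body L = {P, phi P} := by
  obtain ⟨R, hR, hbody⟩ := hsi.exists_body_subset_pair
  exact (Set.encard_lt_two_or_eq_pair_of_subset hbody).imp_right
    fun ⟨h, hne⟩ => ⟨R, hR, hne.symm, h⟩
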